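/- Let k contain all l-th roots of unity and α: k((t))[x_1,...,x_d] → k((t))[x_1,...,x_d] be the k((t))-automorphism x_i ↦ t^{-a_i}x_i. Then the map Λ → Λ' sending a μ_l-equivariant k[[t]]-algebra homomorphism γ: k[[t]][x] → k[[t]] to the restriction of (extension of γ to k((t)))∘α to k[[t^l]][x_1,...,x_d] is a bijection onto the set Λ' of k[[t^l]]-algebra homomorphisms k[[t^l]][x_1,...,x_d] → k[[t^l]]. -/

import Mathlib

open MvPolynomial

/-- The action of an `l`-th root of unity `ζ` on `k[[t]][x_1,...,x_d]`:
`t ↦ ζ t` and `x_i ↦ ζ^{a_i} x_i`. -/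
noncomputable def muActionHom (k : Type*) [CommRing k] {d : ℕ} (a : Fin d → ℕ) (ζ : k) :
    MvPolynomial (Fin d) (PowerSeries k) →+* MvPolynomial (Fin d) (PowerSeries k) :=
  eval₂Hom ((C : PowerSeries k →+* MvPolynomial (Fin d) (PowerSeries k)).comp
      (PowerSeries.rescale ζ))
    (fun i => C ((PowerSeries.C ζ) ^ a i) * X i)

/-- `μ_l`-equivariance of a `k[[t]]`-algebra homomorphism `k[[t]][x_1,...,x_d] → k[[t]]`. -/
def IsEquivariantHom {k : Type*} [CommRing k] {d : ℕ} (a : Fin d → ℕ) (ζ : k)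
    (γ : MvPolynomial (Fin d) (PowerSeries k) →ₐ[PowerSeries k] PowerSeries k) : Prop :=
  ∀ p, γ (muActionHom k a ζ p) = PowerSeries.rescale ζ (γ p)

/-- The subalgebra `k[[t^l]] ⊆ k[[t]]` of power series supported in degrees divisible
by `l`. -/
def lPowerSub (k : Type*) [Field k] (l : ℕ) : Subalgebra k (PowerSeries k) where
  carrier := {f | ∀ m : ℕ, ¬ l ∣ m → PowerSeries.coeff m f = 0}
  add_mem' := by
    intro x y hx hy m hm
    simp only [Set.mem_setOf_eq] at hx hy ⊢
    simp only [map_add, hx m hm, hy m hm, add_zero]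
  mul_mem' := by
    intro x y hx hy m hm
    simp only [Set.mem_setOf_eq] at hx hy ⊢
    rw [PowerSeries.coeff_mul]
    refine Finset.sum_eq_zero fun p hp => ?_
    have hpm : p.1 + p.2 = m := Finset.HasAntidiagonal.mem_antidiagonal.mp hp
    by_cases h1 : l ∣ p.1
    · have h2 : ¬ l ∣ p.2 := fun h2 => hm (hpm ▸ dvd_add h1 h2)
      rw [hy p.2 h2, mul_zero]
    · rw [hx p.1 h1, zero_mul]
  one_mem' := by
    intro m hm
    have hm0 : m ≠ 0 := fun h => hm (h ▸ dvd_zero l)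
    simp [PowerSeries.coeff_one, hm0]
  zero_mem' := by
    intro m _
    simp
  algebraMap_mem' := by
    intro c m hm
    have hm0 : m ≠ 0 := fun h => hm (h ▸ dvd_zero l)
    have : algebraMap k (PowerSeries k) c = PowerSeries.C c := rfl
    simp [this, PowerSeries.coeff_C, hm0]

/-! An equivariant `γ` is determined by the series `fᵢ = γ(xᵢ)`, and equivariance says exactly
that `fᵢ(ζt) = ζ^{aᵢ} fᵢ(t)`, i.e. that `fᵢ` is supported in degrees `≡ aᵢ (mod l)`. Since
`aᵢ < l`, these are the series `t^{aᵢ} gᵢ` with `gᵢ ∈ k[[t^l]]`, and the `gᵢ` are the images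
`ψ(xᵢ)` of an arbitrary `k[[t^l]]`-algebra homomorphism `ψ`. -/

theorem IsPrimitiveRoot.pow_eq_pow_iff_of_lt {M : Type*} [CommMonoid M] {ζ : M} {l m n : ℕ}
    (hζ : IsPrimitiveRoot ζ l) (hn : n < l) : ζ ^ m = ζ ^ n ↔ n ≤ m ∧ l ∣ m - n := by
  have hmod := (hζ.isOfFinOrder (by omega)).pow_eq_pow_iff_modEq (m := n) (n := m)
  rw [← hζ.eq_orderOf] at hmod
  rw [hmod]
  refine ⟨fun h => ?_, fun ⟨hnm, hdvd⟩ => ((Nat.modEq_iff_dvd' hnm).2 hdvd).symm⟩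
  have hnm : n ≤ m := calc
    n = m % l := by rw [h, Nat.mod_eq_of_lt hn]
    _ ≤ m := Nat.mod_le m l
  exact ⟨hnm, (Nat.modEq_iff_dvd' hnm).1 h.symm⟩

theorem PowerSeries.rescale_eq_C_pow_mul_iff {R : Type*} [CommRing R] [IsDomain R] {ζ : R}
    {n : ℕ} {f : PowerSeries R} :
    rescale ζ f = C ζ ^ n * f ↔ ∀ m, coeff m f ≠ 0 → ζ ^ m = ζ ^ n := by
  rw [PowerSeries.ext_iff]
  refine forall_congr' fun m => ?_
  rw [coeff_rescale, ← map_pow, coeff_C_mul, mul_eq_mul_right_iff, or_comm, or_iff_not_imp_left]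

theorem exists_mem_lPowerSub_eq_X_pow_mul_iff {k : Type*} [Field k] {l n : ℕ}
    {f : PowerSeries k} :
    (∃ g ∈ lPowerSub k l, f = PowerSeries.X ^ n * g) ↔
      ∀ m, PowerSeries.coeff m f ≠ 0 → n ≤ m ∧ l ∣ m - n := by
  constructor
  · rintro ⟨g, hg, rfl⟩ m hm
    rw [PowerSeries.coeff_X_pow_mul'] at hm
    split_ifs at hm with hnm
    · exact ⟨hnm, not_not.1 fun hdvd => hm (hg _ hdvd)⟩
    · exact (hm rfl).elim
  · intro h
    obtain ⟨g, rfl⟩ : PowerSeries.X ^ n ∣ f :=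
      PowerSeries.X_pow_dvd_iff.2 fun m hm => not_not.1 fun hc => absurd (h m hc).1 (by omega)
    refine ⟨g, fun m hm => not_not.1 fun hc => hm ?_, rfl⟩
    rw [← PowerSeries.coeff_X_pow_mul] at hc
    simpa using (h _ hc).2

theorem rescale_eq_C_pow_mul_iff_exists_mem_lPowerSub {k : Type*} [Field k] {l n : ℕ} {ζ : k}
    (hζ : IsPrimitiveRoot ζ l) (hn : n < l) {f : PowerSeries k} :
    PowerSeries.rescale ζ f = PowerSeries.C ζ ^ n * f ↔
      ∃ g ∈ lPowerSub k l, f = PowerSeries.X ^ n * g := by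
  rw [PowerSeries.rescale_eq_C_pow_mul_iff, exists_mem_lPowerSub_eq_X_pow_mul_iff]
  exact forall₂_congr fun m _ => hζ.pow_eq_pow_iff_of_lt hn

section Equivariance

variable {k : Type*} [CommRing k] {d : ℕ} {a : Fin d → ℕ} {ζ : k}

theorem muActionHom_C (r : PowerSeries k) :
    muActionHom k a ζ (C r) = C (PowerSeries.rescale ζ r) := by
  simp [muActionHom]

theorem muActionHom_X (i : Fin d) :
    muActionHom k a ζ (X i) = C (PowerSeries.C ζ ^ a i) * X i := by
  simp [muActionHom]

theorem isEquivariantHom_iff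
    {γ : MvPolynomial (Fin d) (PowerSeries k) →ₐ[PowerSeries k] PowerSeries k} :
    IsEquivariantHom a ζ γ ↔
      ∀ i, PowerSeries.rescale ζ (γ (X i)) = PowerSeries.C ζ ^ a i * γ (X i) := by
  refine ⟨fun h i => ?_, fun h p => ?_⟩
  · rw [← h, muActionHom_X, map_mul, algHom_C, Algebra.algebraMap_self, RingHom.id_apply]
  · suffices (γ : _ →+* PowerSeries k).comp (muActionHom k a ζ) =
        (PowerSeries.rescale ζ).comp γ from RingHom.congr_fun this p
    exact ringHom_ext (fun r => by simp [muActionHom_C, algHom_C])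
      (fun i => by simp [muActionHom_X, algHom_C, h])

end Equivariance

/-- Let `k` contain a primitive `l`-th root of unity `ζ` and let
`α : k((t))[x_1,...,x_d] → k((t))[x_1,...,x_d]` be the `k((t))`-automorphism
`x_i ↦ t^{-a_i} x_i`.  The map `Λ → Λ'` sending a `μ_l`-equivariant `k[[t]]`-algebra
homomorphism `γ : k[[t]][x] → k[[t]]` to the restriction of (the Laurent extension of
`γ`) `∘ α` to `k[[t^l]][x_1,...,x_d]` is a bijection onto the set `Λ'` of
`k[[t^l]]`-algebra homomorphisms `k[[t^l]][x_1,...,x_d] → k[[t^l]]`.  The correspondence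
`γ ↔ ψ` is characterized by `γ(x_i) = t^{a_i} · ψ(x_i)`, and bijectivity is expressed by
the two unique-existence statements. -/
theorem equivariant_homs_biject_with_invariant_ring_homs
    (k : Type*) [Field k] (l d : ℕ) (hl : 0 < l)
    (ζ : k) (hζ : IsPrimitiveRoot ζ l)
    (a : Fin d → ℕ) (ha : ∀ i, a i ≤ l - 1) :
    (∀ ψ : MvPolynomial (Fin d) (lPowerSub k l) →ₐ[lPowerSub k l] lPowerSub k l,
      ∃! γ : {γ : MvPolynomial (Fin d) (PowerSeries k) →ₐ[PowerSeries k] PowerSeries k //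
          IsEquivariantHom a ζ γ},
        ∀ i : Fin d,
          (γ : MvPolynomial (Fin d) (PowerSeries k) →ₐ[PowerSeries k] PowerSeries k) (X i)
            = (PowerSeries.X : PowerSeries k) ^ a i * ((ψ (X i) : PowerSeries k))) ∧
    (∀ γ : {γ : MvPolynomial (Fin d) (PowerSeries k) →ₐ[PowerSeries k] PowerSeries k //
        IsEquivariantHom a ζ γ},
      ∃! ψ : MvPolynomial (Fin d) (lPowerSub k l) →ₐ[lPowerSub k l] lPowerSub k l,
        ∀ i : Fin d,
          (γ : MvPolynomial (Fin d) (PowerSeries k) →ₐ[PowerSeries k] PowerSeries k) (X i)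
            = (PowerSeries.X : PowerSeries k) ^ a i * ((ψ (X i) : PowerSeries k))) := by
  have hal : ∀ i, a i < l := fun i => by have := ha i; omega
  refine ⟨fun ψ => ?_, fun γ => ?_⟩
  · have hequiv :
        IsEquivariantHom a ζ (aeval fun i => PowerSeries.X ^ a i * (ψ (X i) : PowerSeries k)) :=
      isEquivariantHom_iff.2 fun i => by
        rw [aeval_X, rescale_eq_C_pow_mul_iff_exists_mem_lPowerSub hζ (hal i)]
        exact ⟨_, (ψ (X i)).2, rfl⟩
    refine ⟨⟨_, hequiv⟩, fun i => aeval_X _ i, fun γ hγ => Subtype.ext (algHom_ext fun i => ?_)⟩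
    rw [hγ i, aeval_X]
  · choose g hg hγg using fun i =>
      (rescale_eq_C_pow_mul_iff_exists_mem_lPowerSub hζ (hal i)).1 (isEquivariantHom_iff.1 γ.2 i)
    refine ⟨aeval fun i => ⟨g i, hg i⟩, fun i => by rw [aeval_X, hγg i],
      fun ψ hψ => algHom_ext fun i => Subtype.ext ?_⟩
    rw [aeval_X]
    exact mul_left_cancel₀ (pow_ne_zero _ PowerSeries.X_ne_zero) ((hψ i).symm.trans (hγg i))
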